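/- For every N ∈ ℕ, N ≥ 2, the dispersion (i.e. the largest gap) of the first N terms of the sequence x_n := {log(2n−1)/log 2} on the torus equals (log(N+1) − log(N))/log(2). Consequently, lim_{N→∞} N·disp_N(x_n) = 1/log(2), so (x_n) is a low-dispersion sequence. -/

import Mathlib

/-!
The point `x_l` equals `{log₂ u}` for every `u = (2l - 1)·2^j`, so unrolling the torus by
`u ↦ log₂ u` turns the points into the naturals whose odd part is at most `2N - 1`, and the gap
to the right of a lift `v` is `log₂ (w / v)` for the next such natural `w` after `v`. All of
`1, …, 2N` are such naturals, so every point has a lift `v ∈ [N, 2N)` whose successor `v + 1` lies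
within `log₂ ((N + 1) / N)`; but `2N + 1` is not, so the gap to the right of the lift `2N` is
exactly `log₂ ((2N + 2) / 2N)`.
-/

/-- The sequence `x_n = {log(2n-1)/log 2}`. -/
noncomputable def xseq (n : ℕ) : ℝ := Int.fract (Real.log (2 * (n : ℝ) - 1) / Real.log 2)

/-- The gap to the right (on the torus `ℝ/ℤ`) of the point `x_k` among the points
`x_1, …, x_N`, i.e. the distance from `x_k` to the nearest other point in the
clockwise direction. -/
noncomputable def gapRight (N k : ℕ) : ℝ :=
  sInf ((fun l => Int.fract (xseq l - xseq k)) '' (Set.Icc 1 N \ {k}))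

/-- The dispersion (largest gap on the torus) of the points `x_1, …, x_N`. -/
noncomputable def disp (N : ℕ) : ℝ := sSup (gapRight N '' Set.Icc 1 N)

open Real Set Filter

lemma fract_sub_fract_logb_eq {c a b : ℝ} (hc : 1 < c) (ha : 0 < a) (hb : 0 < b) {i j : ℕ}
    (h₁ : a * c ^ i ≤ b * c ^ j) (h₂ : b * c ^ j < c * (a * c ^ i)) :
    Int.fract (Int.fract (logb c b) - Int.fract (logb c a)) =
      logb c (b * c ^ j / (a * c ^ i)) := by
  have hc₀ : 0 < c := by linarith
  have hai : 0 < a * c ^ i := by positivity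
  have hlog : logb c (b * c ^ j / (a * c ^ i)) = logb c b - logb c a + j - i := by
    rw [logb_div (by positivity) hai.ne', logb_mul hb.ne' (by positivity),
      logb_mul ha.ne' (by positivity), logb_pow, logb_pow, logb_self_eq_one hc]
    ring
  rw [Int.fract_eq_iff]
  refine ⟨logb_nonneg hc ((one_le_div hai).2 h₁), ?_, ⌊logb c a⌋ - ⌊logb c b⌋ + i - j, ?_⟩
  · calc logb c (b * c ^ j / (a * c ^ i)) < logb c c :=
          (logb_lt_logb_iff hc (by positivity) hc₀).2 ((div_lt_iff₀ hai).2 h₂)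
      _ = 1 := logb_self_eq_one hc
  · rw [hlog, Int.fract, Int.fract]
    push_cast
    ring

lemma exists_le_mul_two_pow_lt {m v : ℕ} (hm : 0 < m) (hmv : m < 2 * v) :
    ∃ j, v ≤ m * 2 ^ j ∧ m * 2 ^ j < 2 * v := by
  have hex : ∃ j, v ≤ m * 2 ^ j :=
    ⟨v, (Nat.lt_two_pow_self).le.trans (Nat.le_mul_of_pos_left _ hm)⟩
  refine ⟨Nat.find hex, Nat.find_spec hex, ?_⟩
  cases hj : Nat.find hex with
  | zero => simpa using hmv
  | succ j =>
    have := Nat.find_min hex (show j < Nat.find hex by omega)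
    rw [pow_succ, ← mul_assoc]
    omega

lemma odd_mul_two_pow_inj {a b i j : ℕ} (ha : Odd a) (hb : Odd b)
    (h : a * 2 ^ i = b * 2 ^ j) : a = b := by
  have hij : i = j := by
    have := congrArg (padicValNat 2) h
    rwa [padicValNat.mul ha.pos.ne' (by positivity), padicValNat.mul hb.pos.ne' (by positivity),
      padicValNat.prime_pow, padicValNat.prime_pow,
      padicValNat.eq_zero_of_not_dvd ha.not_two_dvd_nat,
      padicValNat.eq_zero_of_not_dvd hb.not_two_dvd_nat, zero_add, zero_add] at this
  subst hij
  exact Nat.eq_of_mul_eq_mul_right (by positivity) h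

/-- The naturals `u` with `{log₂ u}` among `x_1, …, x_N`, i.e. those whose odd part is at most
`2N - 1`. -/
def lifts (N : ℕ) : Set ℕ := {u | ∃ l ∈ Icc 1 N, ∃ j, (2 * l - 1) * 2 ^ j = u}

lemma mem_lifts_of_le {N u : ℕ} (hu : 1 ≤ u) (huN : u ≤ 2 * N) : u ∈ lifts N := by
  obtain ⟨j, m, hm, rfl⟩ := Nat.exists_eq_two_pow_mul_odd (n := u) (by omega)
  obtain ⟨r, rfl⟩ := hm
  have : 2 * r + 1 ≤ 2 ^ j * (2 * r + 1) := Nat.le_mul_of_pos_left _ (by positivity)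
  exact ⟨r + 1, ⟨by omega, by omega⟩, j, by rw [mul_comm]; congr 1⟩

lemma two_mul_add_one_notMem_lifts (N : ℕ) : 2 * N + 1 ∉ lifts N := by
  rintro ⟨l, ⟨-, hlN⟩, j, h⟩
  cases j with
  | zero => rw [pow_zero, mul_one] at h; omega
  | succ j =>
    have : 2 ∣ 2 * N + 1 := h ▸ Dvd.dvd.mul_left (dvd_pow_self 2 j.succ_ne_zero) _
    omega

lemma fract_xseq_sub_xseq {k l i j v w : ℕ} (hk : 1 ≤ k) (hl : 1 ≤ l)
    (hv : (2 * k - 1) * 2 ^ i = v) (hw : (2 * l - 1) * 2 ^ j = w) (hvw : v ≤ w) (hwv : w < 2 * v) :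
    Int.fract (xseq l - xseq k) = logb 2 (w / v) := by
  have hodd : ∀ n : ℕ, 1 ≤ n → (2 * (n : ℝ) - 1) = ((2 * n - 1 : ℕ) : ℝ) := fun n hn => by
    rw [Nat.cast_sub (by omega)]
    push_cast
    ring
  have hpos : ∀ n : ℕ, 1 ≤ n → (0 : ℝ) < ((2 * n - 1 : ℕ) : ℝ) := fun n hn => by
    exact_mod_cast (by omega : 0 < 2 * n - 1)
  rw [xseq, xseq, hodd k hk, hodd l hl, ← hv, ← hw]
  push_cast
  exact fract_sub_fract_logb_eq one_lt_two (hpos k hk) (hpos l hl)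
    (by exact_mod_cast hv ▸ hw ▸ hvw) (by exact_mod_cast hv ▸ hw ▸ hwv)

lemma logb_div_le_logb_div_iff {e a b c d : ℝ} (he : 1 < e) (ha : 0 < a) (hb : 0 < b) (hc : 0 < c)
    (hd : 0 < d) : logb e (a / b) ≤ logb e (c / d) ↔ a * d ≤ c * b := by
  rw [logb_le_logb he (by positivity) (by positivity), div_le_div_iff₀ hb hd]

lemma exists_fract_xseq_sub_le {N k : ℕ} (hN : 2 ≤ N) (hk : k ∈ Icc 1 N) :
    ∃ l ∈ Icc 1 N \ {k}, Int.fract (xseq l - xseq k) ≤ logb 2 ((N + 1) / N) := by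
  obtain ⟨hk1, hkN⟩ := hk
  obtain ⟨i, hNv, hv2N⟩ := exists_le_mul_two_pow_lt (m := 2 * k - 1) (v := N) (by omega) (by omega)
  set v := (2 * k - 1) * 2 ^ i with hv
  have hv_pos : (0 : ℝ) < v := Nat.cast_pos.2 (by omega)
  obtain ⟨l, hl, j, hw⟩ := mem_lifts_of_le (N := N) (u := v + 1) (by omega) (by omega)
  have hgap := fract_xseq_sub_xseq hk1 hl.1 hv.symm hw (by omega) (by omega)
  refine ⟨l, ⟨hl, ?_⟩, ?_⟩
  · rintro rfl
    rw [sub_self, Int.fract_zero] at hgap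
    refine (logb_pos one_lt_two ?_).ne hgap
    rw [one_lt_div hv_pos]
    exact_mod_cast Nat.lt_succ_self v
  · rw [hgap, logb_div_le_logb_div_iff one_lt_two (by positivity) hv_pos (by positivity)
      (Nat.cast_pos.2 (by omega))]
    exact_mod_cast (by nlinarith : (v + 1) * N ≤ (N + 1) * v)

lemma exists_le_fract_xseq_sub {N : ℕ} (hN : 1 ≤ N) :
    ∃ k ∈ Icc 1 N, ∀ l ∈ Icc 1 N \ {k}, logb 2 ((N + 1) / N) ≤ Int.fract (xseq l - xseq k) := by
  obtain ⟨k, ⟨hk1, hkN⟩, i, hv⟩ := mem_lifts_of_le (u := 2 * N) (by omega) le_rfl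
  refine ⟨k, ⟨hk1, hkN⟩, fun l ⟨⟨hl1, hlN⟩, hlk⟩ => ?_⟩
  obtain ⟨j, hvw, hwv⟩ :=
    exists_le_mul_two_pow_lt (m := 2 * l - 1) (v := 2 * N) (by omega) (by omega)
  set w := (2 * l - 1) * 2 ^ j with hw
  have hw_ne : w ≠ 2 * N := fun h => hlk <| mem_singleton_iff.2 <| by
    have := odd_mul_two_pow_inj ⟨l - 1, by omega⟩ ⟨k - 1, by omega⟩ (h.trans hv.symm)
    omega
  have hw_ne' : w ≠ 2 * N + 1 := fun h => two_mul_add_one_notMem_lifts N ⟨l, ⟨hl1, hlN⟩, j, h⟩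
  have hw_ge : (N + 1) * (2 * N) ≤ w * N := by nlinarith [show 2 * N + 2 ≤ w by omega]
  rw [fract_xseq_sub_xseq hk1 hl1 hv hw.symm hvw hwv, logb_div_le_logb_div_iff one_lt_two
    (by positivity) (Nat.cast_pos.2 (by omega)) (Nat.cast_pos.2 (by omega))
    (Nat.cast_pos.2 (by omega))]
  exact_mod_cast hw_ge

lemma gapRight_le {N k : ℕ} {L : ℝ}
    (h : ∃ l ∈ Icc 1 N \ {k}, Int.fract (xseq l - xseq k) ≤ L) : gapRight N k ≤ L := by
  obtain ⟨l, hl, hle⟩ := h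
  exact (csInf_le ((finite_Icc 1 N).sdiff.image _).bddBelow (mem_image_of_mem _ hl)).trans hle

lemma le_gapRight {N k : ℕ} {L : ℝ} (hne : (Icc 1 N \ {k}).Nonempty)
    (h : ∀ l ∈ Icc 1 N \ {k}, L ≤ Int.fract (xseq l - xseq k)) : L ≤ gapRight N k :=
  le_csInf (hne.image _) (forall_mem_image.2 h)

lemma disp_eq_logb {N : ℕ} (hN : 2 ≤ N) : disp N = logb 2 ((N + 1) / N) := by
  obtain ⟨k, hk, hlow⟩ := exists_le_fract_xseq_sub (by omega : 1 ≤ N)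
  obtain ⟨l, hl, -⟩ := exists_fract_xseq_sub_le hN hk
  refine le_antisymm (csSup_le ⟨_, mem_image_of_mem _ hk⟩ ?_) ?_
  · exact forall_mem_image.2 fun k hk => gapRight_le (exists_fract_xseq_sub_le hN hk)
  · exact (le_gapRight ⟨l, hl⟩ hlow).trans
      (le_csSup ((finite_Icc 1 N).image _).bddAbove (mem_image_of_mem _ hk))

theorem dispersion_eq_and_low_dispersion :
    (∀ N : ℕ, 2 ≤ N →
      disp N = (Real.log ((N : ℝ) + 1) - Real.log (N : ℝ)) / Real.log 2) ∧
    Filter.Tendsto (fun N : ℕ => (N : ℝ) * disp N) Filter.atTop (nhds (1 / Real.log 2)) := by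
  refine ⟨fun N hN => ?_, ?_⟩
  · rw [disp_eq_logb hN, logb, log_div (by positivity) (by positivity)]
  · have hlim := ((tendsto_mul_log_one_add_div_atTop 1).comp tendsto_natCast_atTop_atTop).div_const
      (log 2)
    refine hlim.congr' ?_
    filter_upwards [eventually_ge_atTop 2] with N hN
    rw [Function.comp_apply, disp_eq_logb hN, logb, one_add_div (by positivity), mul_div_assoc]
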